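/- arXiv:2510.23132 — 6 statements merged into one kernel-verified Lean document; each statement's English description precedes it below -/
import Mathlib

section
/- If A is pseudo-similar to B via T (with inner inverses T⁻ and T⁼ such that A = T B T⁼ and B = T⁻ A T), then B = T⁻ T B T⁼ T, B = T⁻ T B, and B = B T⁼ T. -/
/-!
Substituting `A = T B T⁼` into `B = T⁻ A T` gives `B = (T⁻ T) B (T⁼ T)`. Since `T⁻` and `T⁼` are
inner inverses of `T`, both `T⁻ T` and `T⁼ T` are idempotent, and an idempotent factor on either
side of `B` in such an identity is absorbed: `P B = P (P B Q) = P B Q = B`.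
-/

open ContinuousLinearMap

theorem IsIdempotentElem.mul_eq_of_eq_mul_mul {M : Type*} [Semigroup M] {p q b : M}
    (hp : IsIdempotentElem p) (h : b = p * b * q) : p * b = b := by
  rw [h, ← mul_assoc, ← mul_assoc, hp.eq]

theorem IsIdempotentElem.mul_eq_of_eq_mul_mul_right {M : Type*} [Semigroup M] {p q b : M}
    (hq : IsIdempotentElem q) (h : b = p * b * q) : b * q = b := by
  rw [h, mul_assoc, hq.eq]

namespace ContinuousLinearMap

variable {R E F : Type*} [Semiring R] [TopologicalSpace E] [AddCommMonoid E] [Module R E]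
  [TopologicalSpace F] [AddCommMonoid F] [Module R F]

theorem isIdempotentElem_comp_of_comp_comp_eq {S : F →L[R] E} {T : E →L[R] F}
    (h : T ∘L S ∘L T = T) : IsIdempotentElem (S ∘L T) := by
  change S ∘L (T ∘L S ∘L T) = S ∘L T
  rw [h]

end ContinuousLinearMap

theorem stmt_1_general {H K : Type*} [NormedAddCommGroup H] [InnerProductSpace ℂ H]
    [NormedAddCommGroup K] [InnerProductSpace ℂ K]
    (A : H →L[ℂ] H) (B : K →L[ℂ] K) (T : K →L[ℂ] H) (Tm Te : H →L[ℂ] K)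
    (hTm : T ∘L Tm ∘L T = T) (hTe : T ∘L Te ∘L T = T)
    (hA : A = T ∘L B ∘L Te) (hB : B = Tm ∘L A ∘L T) :
    B = Tm ∘L T ∘L B ∘L Te ∘L T ∧ B = Tm ∘L T ∘L B ∧ B = B ∘L Te ∘L T := by
  have hB' : B = Tm ∘L T ∘L B ∘L Te ∘L T := by
    conv_lhs => rw [hB, hA]
    simp only [comp_assoc]
  refine ⟨hB', ?_, ?_⟩
  · exact ((isIdempotentElem_comp_of_comp_comp_eq hTm).mul_eq_of_eq_mul_mul
      (q := Te ∘L T) hB').symm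
  · exact ((isIdempotentElem_comp_of_comp_comp_eq hTe).mul_eq_of_eq_mul_mul_right
      (p := Tm ∘L T) hB').symm

/-- If `A` is pseudo-similar to `B` via `T` (with inner inverses `T⁻ = Tm`,
`T⁼ = Te` such that `A = T B T⁼` and `B = T⁻ A T`), then `B = T⁻ T B T⁼ T`, `B = T⁻ T B`
and `B = B T⁼ T`. -/
theorem stmt_1 {H K : Type*} [NormedAddCommGroup H] [InnerProductSpace ℂ H] [CompleteSpace H]
    [NormedAddCommGroup K] [InnerProductSpace ℂ K] [CompleteSpace K]
    (A : H →L[ℂ] H) (B : K →L[ℂ] K) (T : K →L[ℂ] H) (Tm Te : H →L[ℂ] K)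
    (hTm : T ∘L Tm ∘L T = T) (hTe : T ∘L Te ∘L T = T)
    (hA : A = T ∘L B ∘L Te) (hB : B = Tm ∘L A ∘L T) :
    B = Tm ∘L T ∘L B ∘L Te ∘L T ∧ B = Tm ∘L T ∘L B ∧ B = B ∘L Te ∘L T :=
  stmt_1_general A B T Tm Te hTm hTe hA hB
end

section
/- Let T be a regular operator with inner inverses T⁻ and T⁼. The following are equivalent: (i) A = T B T⁼ and B = T⁻ A T; (ii) A T = T B, A = A T T⁼, and B = T⁻ T B; (iii) B T⁼ = T⁻ A, T T⁻ A = A, and B T⁼ T = B. -/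
/-!
The conditions are linked by the cycle (i) → (ii) → (iii) → (i); each step substitutes one
defining equation into another and, where needed, cancels an occurrence of `T T⁻ T`.
-/

namespace ContinuousLinearMap

variable {R M N : Type*} [Semiring R]
  [TopologicalSpace M] [AddCommMonoid M] [Module R M]
  [TopologicalSpace N] [AddCommMonoid N] [Module R N]
  {A : M →L[R] M} {B : N →L[R] N} {T : N →L[R] M} {Tm Te : M →L[R] N}

theorem intertwining_of_conj (hTm : T ∘L Tm ∘L T = T) :
    A = T ∘L B ∘L Te ∧ B = Tm ∘L A ∘L T →
      A ∘L T = T ∘L B ∧ A = A ∘L T ∘L Te ∧ B = Tm ∘L T ∘L B := by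
  rintro ⟨hA, hB⟩
  have hAT : A ∘L T = T ∘L B := calc
    A ∘L T = (T ∘L B ∘L Te) ∘L T := by rw [← hA]
    _ = (T ∘L Tm ∘L T) ∘L B ∘L Te ∘L T := by rw [hTm]; simp only [comp_assoc]
    _ = T ∘L Tm ∘L (T ∘L B ∘L Te) ∘L T := by simp only [comp_assoc]
    _ = T ∘L B := by rw [← hA, ← hB]
  refine ⟨hAT, ?_, ?_⟩
  · rw [← comp_assoc, hAT, comp_assoc, ← hA]
  · rwa [hAT] at hB

theorem dual_intertwining_of_intertwining (hTm : T ∘L Tm ∘L T = T) :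
    A ∘L T = T ∘L B ∧ A = A ∘L T ∘L Te ∧ B = Tm ∘L T ∘L B →
      B ∘L Te = Tm ∘L A ∧ T ∘L Tm ∘L A = A ∧ B ∘L Te ∘L T = B := by
  rintro ⟨hAT, hA, hB⟩
  have hBTe : B ∘L Te = Tm ∘L A := calc
    B ∘L Te = (Tm ∘L T ∘L B) ∘L Te := by rw [← hB]
    _ = Tm ∘L (A ∘L T) ∘L Te := by rw [hAT]; simp only [comp_assoc]
    _ = Tm ∘L A := by rw [comp_assoc, ← hA]
  refine ⟨hBTe, ?_, ?_⟩
  · calc T ∘L Tm ∘L A = T ∘L Tm ∘L (A ∘L T) ∘L Te := by rw [comp_assoc, ← hA]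
      _ = (T ∘L Tm ∘L T) ∘L B ∘L Te := by rw [hAT]; simp only [comp_assoc]
      _ = (A ∘L T) ∘L Te := by rw [hTm, hAT, comp_assoc]
      _ = A := by rw [comp_assoc, ← hA]
  · rw [← comp_assoc, hBTe, comp_assoc, hAT, ← hB]

theorem conj_of_dual_intertwining :
    B ∘L Te = Tm ∘L A ∧ T ∘L Tm ∘L A = A ∧ B ∘L Te ∘L T = B →
      A = T ∘L B ∘L Te ∧ B = Tm ∘L A ∘L T := by
  rintro ⟨hBTe, hTTmA, hB⟩
  constructor
  · rw [hBTe, hTTmA]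
  · rw [← hB, ← comp_assoc, hBTe, comp_assoc]

end ContinuousLinearMap

open ContinuousLinearMap

theorem stmt_4_general {H K : Type*} [NormedAddCommGroup H] [InnerProductSpace ℂ H]
    [NormedAddCommGroup K] [InnerProductSpace ℂ K]
    (A : H →L[ℂ] H) (B : K →L[ℂ] K) (T : K →L[ℂ] H) (Tm Te : H →L[ℂ] K)
    (hTm : T ∘L Tm ∘L T = T) :
    ((A = T ∘L B ∘L Te ∧ B = Tm ∘L A ∘L T) ↔
      (A ∘L T = T ∘L B ∧ A = A ∘L T ∘L Te ∧ B = Tm ∘L T ∘L B)) ∧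
    ((A ∘L T = T ∘L B ∧ A = A ∘L T ∘L Te ∧ B = Tm ∘L T ∘L B) ↔
      (B ∘L Te = Tm ∘L A ∧ T ∘L Tm ∘L A = A ∧ B ∘L Te ∘L T = B)) := by
  have i_ii := intertwining_of_conj (A := A) (B := B) (Te := Te) hTm
  have ii_iii := dual_intertwining_of_intertwining (A := A) (B := B) (Te := Te) hTm
  have iii_i := conj_of_dual_intertwining (A := A) (B := B) (T := T) (Tm := Tm) (Te := Te)
  exact ⟨⟨i_ii, iii_i ∘ ii_iii⟩, ⟨ii_iii, i_ii ∘ iii_i⟩⟩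

/-- For a regular operator `T` with inner inverses `T⁻ = Tm` and `T⁼ = Te`,
the following are equivalent:
(i) `A = T B T⁼` and `B = T⁻ A T`;
(ii) `A T = T B`, `A = A T T⁼` and `B = T⁻ T B`;
(iii) `B T⁼ = T⁻ A`, `T T⁻ A = A` and `B T⁼ T = B`. -/
theorem stmt_4 {H K : Type*} [NormedAddCommGroup H] [InnerProductSpace ℂ H] [CompleteSpace H]
    [NormedAddCommGroup K] [InnerProductSpace ℂ K] [CompleteSpace K]
    (A : H →L[ℂ] H) (B : K →L[ℂ] K) (T : K →L[ℂ] H) (Tm Te : H →L[ℂ] K)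
    (hTm : T ∘L Tm ∘L T = T) (hTe : T ∘L Te ∘L T = T) :
    ((A = T ∘L B ∘L Te ∧ B = Tm ∘L A ∘L T) ↔
      (A ∘L T = T ∘L B ∧ A = A ∘L T ∘L Te ∧ B = Tm ∘L T ∘L B)) ∧
    ((A ∘L T = T ∘L B ∧ A = A ∘L T ∘L Te ∧ B = Tm ∘L T ∘L B) ↔
      (B ∘L Te = Tm ∘L A ∧ T ∘L Tm ∘L A = A ∧ B ∘L Te ∘L T = B)) :=
  stmt_4_general A B T Tm Te hTm
end

section
/- Let A, B be group invertible and suppose X satisfies AX - XB = C. Then the operator P = [[AA♯, -X B B♯],[0, B B♯]] is regular, P⁻ = [[AA♯, AA♯ X B B♯],[0, B B♯]] and P⁼ = [[AA♯, AA♯ X],[0, B B♯]] are inner inverses of P, and P [[A,0],[0,B]] P⁼ = [[A,C],[0,B]] and P⁻ [[A,C],[0,B]] P = [[A,0],[0,B]]; hence the block matrix M = [[A,C],[0,B]] is pseudo-similar to D = [[A,0],[0,B]]. -/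
/-
With `E = A A♯` and `F = B B♯`, group invertibility gives idempotents with `A E = E A = A` and
`B F = F B = B`. Multiplying out the 2 × 2 blocks, every identity reduces to these absorption
rules together with `C = A X - X B`.
-/

open ContinuousLinearMap

/-- The 2×2 block operator `[[A₁₁, A₁₂],[A₂₁, A₂₂]]` on `H ⊕ K`. -/
noncomputable def blk {H K : Type*} [NormedAddCommGroup H] [InnerProductSpace ℂ H]
    [NormedAddCommGroup K] [InnerProductSpace ℂ K]
    (A₁₁ : H →L[ℂ] H) (A₁₂ : K →L[ℂ] H) (A₂₁ : H →L[ℂ] K) (A₂₂ : K →L[ℂ] K) :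
    (H × K) →L[ℂ] (H × K) :=
  (A₁₁ ∘L fst ℂ H K + A₁₂ ∘L snd ℂ H K).prod (A₂₁ ∘L fst ℂ H K + A₂₂ ∘L snd ℂ H K)

theorem isIdempotentElem_mul_of_mul_mul_eq {M : Type*} [Semigroup M] {a b : M}
    (h : a * b * a = a) : IsIdempotentElem (a * b) := by
  rw [IsIdempotentElem, ← mul_assoc, h]

theorem mul_mul_eq_self_of_commute {M : Type*} [Semigroup M] {a b : M}
    (h : a * b * a = a) (hc : a * b = b * a) : a * (a * b) = a := by
  rw [hc, ← mul_assoc, h]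

section CompAssoc

variable {R : Type*} [Semiring R] {M₁ M₂ M₃ M₄ : Type*}
  [TopologicalSpace M₁] [AddCommMonoid M₁] [Module R M₁]
  [TopologicalSpace M₂] [AddCommMonoid M₂] [Module R M₂]
  [TopologicalSpace M₃] [AddCommMonoid M₃] [Module R M₃]
  [TopologicalSpace M₄] [AddCommMonoid M₄] [Module R M₄]

theorem ContinuousLinearMap.comp_comp_of_comp_eq {f : M₂ →L[R] M₃} {g : M₁ →L[R] M₂}
    {h : M₁ →L[R] M₃} (hfg : f ∘L g = h) (k : M₃ →L[R] M₄) : (k ∘L f) ∘L g = k ∘L h := by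
  rw [comp_assoc, hfg]

end CompAssoc

def IsInnerInverse {R : Type*} [Mul R] (p q : R) : Prop := p * q * p = p

section Block

variable {H K : Type*} [NormedAddCommGroup H] [InnerProductSpace ℂ H]
  [NormedAddCommGroup K] [InnerProductSpace ℂ K]

theorem blk_mul (a e : H →L[ℂ] H) (b f : K →L[ℂ] H) (c g : H →L[ℂ] K) (d h : K →L[ℂ] K) :
    blk a b c d * blk e f g h =
      blk (a ∘L e + b ∘L g) (a ∘L f + b ∘L h) (c ∘L e + d ∘L g) (c ∘L f + d ∘L h) := by
  ext x <;> simp [blk]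

/- The block products below are normalized to left-associated compositions, in which every
prefix is a subterm; `comp_comp_of_comp_eq` extends each absorption rule `u ∘L v = w` to the
remaining subproducts. -/

theorem isInnerInverse_blk {E : H →L[ℂ] H} {F : K →L[ℂ] K} {X Y : K →L[ℂ] H}
    (hE : IsIdempotentElem E) (hF : IsIdempotentElem F) (hY : E ∘L Y ∘L F = E ∘L X ∘L F) :
    IsInnerInverse (blk E (-(X ∘L F)) 0 F) (blk E Y 0 F) := by
  have hE' : E ∘L E = E := hE.eq
  have hF' : F ∘L F = F := hF.eq
  rw [← comp_assoc] at hY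
  rw [IsInnerInverse, blk_mul, blk_mul]
  simp only [zero_comp, comp_zero, add_zero, zero_add, comp_neg, neg_comp, add_comp,
    ← comp_assoc, neg_zero, hE', hF', comp_comp_of_comp_eq hF', hY]
  congr 1
  abel

theorem isInnerInverse_blk_comp {E : H →L[ℂ] H} {F : K →L[ℂ] K} (X : K →L[ℂ] H)
    (hE : IsIdempotentElem E) (hF : IsIdempotentElem F) :
    IsInnerInverse (blk E (-(X ∘L F)) 0 F) (blk E (E ∘L X) 0 F) := by
  have hE' : E ∘L E = E := hE.eq
  refine isInnerInverse_blk hE hF ?_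
  simp only [← comp_assoc, hE']

theorem isInnerInverse_blk_comp_comp {E : H →L[ℂ] H} {F : K →L[ℂ] K} (X : K →L[ℂ] H)
    (hE : IsIdempotentElem E) (hF : IsIdempotentElem F) :
    IsInnerInverse (blk E (-(X ∘L F)) 0 F) (blk E (E ∘L X ∘L F) 0 F) := by
  have hE' : E ∘L E = E := hE.eq
  have hF' : F ∘L F = F := hF.eq
  refine isInnerInverse_blk hE hF ?_
  simp only [← comp_assoc, hE', comp_comp_of_comp_eq hF']

variable {A E : H →L[ℂ] H} {B F : K →L[ℂ] K}

theorem blk_mul_diag_mul_blk (X : K →L[ℂ] H)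
    (hAE : A * E = A) (hEA : E * A = A) (hBF : B * F = B) (hFB : F * B = B) :
    blk E (-(X ∘L F)) 0 F * blk A 0 0 B * blk E (E ∘L X) 0 F = blk A (A ∘L X - X ∘L B) 0 B := by
  rw [mul_def] at hAE hEA hBF hFB
  rw [blk_mul, blk_mul]
  simp only [zero_comp, comp_zero, add_zero, zero_add, neg_comp, ← comp_assoc,
    hAE, hEA, hBF, comp_comp_of_comp_eq hBF, hFB, comp_comp_of_comp_eq hFB]
  congr 1
  abel

theorem blk_mul_upper_mul_blk (X : K →L[ℂ] H)
    (hAE : A * E = A) (hEA : E * A = A) (hBF : B * F = B) (hFB : F * B = B) :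
    blk E (E ∘L X ∘L F) 0 F * blk A (A ∘L X - X ∘L B) 0 B * blk E (-(X ∘L F)) 0 F =
      blk A 0 0 B := by
  rw [mul_def] at hAE hEA hBF hFB
  rw [blk_mul, blk_mul]
  simp only [zero_comp, comp_zero, add_zero, zero_add, comp_neg, add_comp, comp_sub, sub_comp,
    ← comp_assoc, neg_zero, sub_zero, hAE, hEA, hBF, comp_comp_of_comp_eq hBF, hFB,
    comp_comp_of_comp_eq hFB]
  congr 1
  abel

end Block

theorem stmt_7_general {H K : Type*} [NormedAddCommGroup H] [InnerProductSpace ℂ H]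
    [NormedAddCommGroup K] [InnerProductSpace ℂ K]
    (A As : H →L[ℂ] H) (B Bs : K →L[ℂ] K) (C X : K →L[ℂ] H)
    (hA1 : A * As * A = A) (hA3 : A * As = As * A)
    (hB1 : B * Bs * B = B) (hB3 : B * Bs = Bs * B)
    (hX : A ∘L X - X ∘L B = C) :
    letI P := blk (A * As) (-(X ∘L (B * Bs))) 0 (B * Bs)
    letI Pm := blk (A * As) ((A * As) ∘L X ∘L (B * Bs)) 0 (B * Bs)
    letI Pe := blk (A * As) ((A * As) ∘L X) 0 (B * Bs)
    letI M := blk A C 0 B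
    letI D := blk A 0 0 B
    P * Pm * P = P ∧ P * Pe * P = P ∧ P * D * Pe = M ∧ Pm * M * P = D := by
  have hE := isIdempotentElem_mul_of_mul_mul_eq hA1
  have hF := isIdempotentElem_mul_of_mul_mul_eq hB1
  have hAE := mul_mul_eq_self_of_commute hA1 hA3
  have hBF := mul_mul_eq_self_of_commute hB1 hB3
  subst hX
  exact ⟨isInnerInverse_blk_comp_comp X hE hF, isInnerInverse_blk_comp X hE hF,
    blk_mul_diag_mul_blk X hAE hA1 hBF hB1, blk_mul_upper_mul_blk X hAE hA1 hBF hB1⟩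

/-- Let `A`, `B` be group invertible (group inverses `As`, `Bs`) and suppose
`A X - X B = C`.  Then `P = [[A A♯, -X B B♯],[0, B B♯]]` is regular,
`P⁻ = [[A A♯, A A♯ X B B♯],[0, B B♯]]` and `P⁼ = [[A A♯, A A♯ X],[0, B B♯]]` are inner
inverses of `P`, and `P D P⁼ = M`, `P⁻ M P = D` where `M = [[A, C],[0, B]]`,
`D = [[A, 0],[0, B]]`; hence `M` is pseudo-similar to `D` via `P`. -/
theorem stmt_7 {H K : Type*} [NormedAddCommGroup H] [InnerProductSpace ℂ H] [CompleteSpace H]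
    [NormedAddCommGroup K] [InnerProductSpace ℂ K] [CompleteSpace K]
    (A As : H →L[ℂ] H) (B Bs : K →L[ℂ] K) (C X : K →L[ℂ] H)
    (hA1 : A * As * A = A) (hA2 : As * A * As = As) (hA3 : A * As = As * A)
    (hB1 : B * Bs * B = B) (hB2 : Bs * B * Bs = Bs) (hB3 : B * Bs = Bs * B)
    (hX : A ∘L X - X ∘L B = C) :
    letI P := blk (A * As) (-(X ∘L (B * Bs))) 0 (B * Bs)
    letI Pm := blk (A * As) ((A * As) ∘L X ∘L (B * Bs)) 0 (B * Bs)
    letI Pe := blk (A * As) ((A * As) ∘L X) 0 (B * Bs)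
    letI M := blk A C 0 B
    letI D := blk A 0 0 B
    P * Pm * P = P ∧ P * Pe * P = P ∧ P * D * Pe = M ∧ Pm * M * P = D :=
  stmt_7_general A As B Bs C X hA1 hA3 hB1 hB3 hX
end

section
/- Let A, B be group invertible operators with spectral idempotents Aᵖ = I - A A♯ and Bᵖ = I - B B♯. If Aᵖ C Bᵖ = 0, then X₀ = A♯ C and Y₀ = (A A♯ - I) C B♯ satisfy A X₀ - Y₀ B = C. -/
open ContinuousLinearMap

/- With `P = A A♯` and `Q = B B♯ = B♯ B`, the claimed identity is `P C - (P - 1) C Q = C`, which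
after expanding is the negative of the hypothesis `(1 - P) C (1 - Q) = 0`. -/

theorem comp_sub_sub_one_comp_comp_eq_self {R M N : Type*} [Ring R]
    [TopologicalSpace M] [AddCommGroup M] [Module R M] [IsTopologicalAddGroup M]
    [TopologicalSpace N] [AddCommGroup N] [Module R N] [IsTopologicalAddGroup N]
    (P : M →L[R] M) (Q : N →L[R] N) (C : N →L[R] M)
    (h : (1 - P) ∘L C ∘L (1 - Q) = 0) :
    P ∘L C - (P - 1) ∘L C ∘L Q = C := by
  simp only [sub_comp, comp_sub, one_def, id_comp, comp_id] at h ⊢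
  rw [← sub_eq_zero, ← neg_eq_zero, ← h]
  abel

theorem stmt_8_general {H K : Type*} [NormedAddCommGroup H] [InnerProductSpace ℂ H]
    [NormedAddCommGroup K] [InnerProductSpace ℂ K]
    (A As : H →L[ℂ] H) (B Bs : K →L[ℂ] K) (C : K →L[ℂ] H)
    (hB3 : B * Bs = Bs * B)
    (hC : (1 - A * As) ∘L C ∘L (1 - B * Bs) = 0) :
    A ∘L (As ∘L C) - ((A * As - 1) ∘L C ∘L Bs) ∘L B = C := by
  have hBs : Bs ∘L B = B * Bs := by rw [hB3]; rfl
  have key := comp_sub_sub_one_comp_comp_eq_self (A * As) (B * Bs) C hC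
  rwa [comp_assoc, comp_assoc, hBs, ← comp_assoc A, ← mul_def]

/-- Let `A`, `B` be group invertible with group inverses `A♯ = As`, `B♯ = Bs`
and spectral idempotents `Aᵖ = 1 - A A♯`, `Bᵖ = 1 - B B♯`. If `Aᵖ C Bᵖ = 0`, then
`X₀ = A♯ C` and `Y₀ = (A A♯ - I) C B♯` satisfy `A X₀ - Y₀ B = C`. -/
theorem stmt_8 {H K : Type*} [NormedAddCommGroup H] [InnerProductSpace ℂ H] [CompleteSpace H]
    [NormedAddCommGroup K] [InnerProductSpace ℂ K] [CompleteSpace K]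
    (A As : H →L[ℂ] H) (B Bs : K →L[ℂ] K) (C : K →L[ℂ] H)
    (hA1 : A * As * A = A) (hA2 : As * A * As = As) (hA3 : A * As = As * A)
    (hB1 : B * Bs * B = B) (hB2 : Bs * B * Bs = Bs) (hB3 : B * Bs = Bs * B)
    (hC : (1 - A * As) ∘L C ∘L (1 - B * Bs) = 0) :
    A ∘L (As ∘L C) - ((A * As - 1) ∘L C ∘L Bs) ∘L B = C :=
  stmt_8_general A As B Bs C hB3 hC
end

section
/- Let A, B be group invertible operators with Aᵖ C Bᵖ = 0, and define P = [[A A♯, Aᵖ C B♯],[0, B B♯]] and Q = [[A A♯, A♯ C],[0, B B♯]] on H ⊕ K. Then P⁻ = [[A A♯, 0],[0, B B♯]] is an inner inverse of P, Q⁻ = [[A A♯, -A♯ C B B♯],[0, B B♯]] is an inner inverse of Q, and P D Q = M and P⁻ M Q⁻ = D, where M = [[A, C],[0, B]] and D = [[A, 0],[0, B]]. Hence M and D are pseudo-equivalent via P and Q. -/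
/-!
Write `E = A A♯` and `F = B B♯`. The group inverse identities make `E` and `F` idempotents that
absorb `A`, `A♯` (resp. `B`, `B♯`) on either side, so every product of the upper triangular block
operators involved collapses blockwise. In the corner of `P D Q` one meets `E C + (1 - E) C F`,
which equals `C - (1 - E) C (1 - F) = C - Aᵖ C Bᵖ`.
-/

open ContinuousLinearMap

structure IsGroupInverse {M : Type*} [Semigroup M] (a b : M) : Prop where
  mul_inv_mul : a * b * a = a
  inv_mul_inv : b * a * b = b
  commute : Commute a b

namespace IsGroupInverse

variable {M : Type*} [Semigroup M] {a b : M}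

theorem isIdempotentElem (h : IsGroupInverse a b) : IsIdempotentElem (a * b) := by
  rw [IsIdempotentElem, ← mul_assoc, h.mul_inv_mul]

theorem mul_mul_inv (h : IsGroupInverse a b) : a * (a * b) = a := by
  rw [h.commute.eq, ← mul_assoc, h.mul_inv_mul]

theorem mul_inv_mul_inv (h : IsGroupInverse a b) : a * b * b = b := by
  rw [h.commute.eq, h.inv_mul_inv]

theorem inv_mul_mul_inv (h : IsGroupInverse a b) : b * (a * b) = b := by
  rw [← mul_assoc, h.inv_mul_inv]

end IsGroupInverse

theorem ContinuousLinearMap.comp_add_one_sub_comp_comp_eq_self {R M N : Type*} [Ring R]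
    [TopologicalSpace M] [AddCommGroup M] [IsTopologicalAddGroup M] [Module R M]
    [TopologicalSpace N] [AddCommGroup N] [IsTopologicalAddGroup N] [Module R N]
    {e : M →L[R] M} {f : N →L[R] N} {c : N →L[R] M} (h : (1 - e) ∘L c ∘L (1 - f) = 0) :
    e ∘L c + (1 - e) ∘L c ∘L f = c := by
  rw [← add_zero (e ∘L c + _), ← h]
  simp only [comp_sub, sub_comp, one_def, comp_id, id_comp]
  abel

section PseudoEquivalence

variable {H K : Type*} [NormedAddCommGroup H] [InnerProductSpace ℂ H]
  [NormedAddCommGroup K] [InnerProductSpace ℂ K]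
  {A As : H →L[ℂ] H} {B Bs : K →L[ℂ] K} {C : K →L[ℂ] H}

theorem blk_zero_mul_blk_zero (a e : H →L[ℂ] H) (b f : K →L[ℂ] H) (d h : K →L[ℂ] K) :
    blk a b 0 d * blk e f 0 h = blk (a * e) (a ∘L f + b ∘L h) 0 (d * h) := by
  ext x <;> simp [blk]

theorem blk_left_mul_innerInverse_mul_self (hA : IsGroupInverse A As) (hB : IsGroupInverse B Bs) :
    blk (A * As) ((1 - A * As) ∘L C ∘L Bs) 0 (B * Bs) * blk (A * As) 0 0 (B * Bs) *
        blk (A * As) ((1 - A * As) ∘L C ∘L Bs) 0 (B * Bs) =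
      blk (A * As) ((1 - A * As) ∘L C ∘L Bs) 0 (B * Bs) := by
  rw [blk_zero_mul_blk_zero, hA.isIdempotentElem.eq, hB.isIdempotentElem.eq, comp_zero, zero_add,
    comp_assoc, comp_assoc, ← mul_def, hB.inv_mul_mul_inv]
  rw [blk_zero_mul_blk_zero, hA.isIdempotentElem.eq, hB.isIdempotentElem.eq, comp_assoc,
    comp_assoc, ← mul_def, hB.inv_mul_mul_inv, ← comp_assoc, ← mul_def,
    hA.isIdempotentElem.mul_one_sub_self, zero_comp, zero_add]

theorem blk_right_mul_innerInverse_mul_self (hA : IsGroupInverse A As) (hB : IsGroupInverse B Bs) :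
    blk (A * As) (As ∘L C) 0 (B * Bs) * blk (A * As) (-(As ∘L C ∘L (B * Bs))) 0 (B * Bs) *
        blk (A * As) (As ∘L C) 0 (B * Bs) =
      blk (A * As) (As ∘L C) 0 (B * Bs) := by
  rw [blk_zero_mul_blk_zero, hA.isIdempotentElem.eq, hB.isIdempotentElem.eq, comp_neg,
    ← comp_assoc, ← mul_def, hA.mul_inv_mul_inv, comp_assoc, neg_add_cancel]
  rw [blk_zero_mul_blk_zero, hA.isIdempotentElem.eq, hB.isIdempotentElem.eq, ← comp_assoc,
    ← mul_def, hA.mul_inv_mul_inv, zero_comp, add_zero]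

theorem blk_left_mul_diag_mul_right (hA : IsGroupInverse A As) (hB : IsGroupInverse B Bs)
    (hC : (1 - A * As) ∘L C ∘L (1 - B * Bs) = 0) :
    blk (A * As) ((1 - A * As) ∘L C ∘L Bs) 0 (B * Bs) * blk A 0 0 B *
        blk (A * As) (As ∘L C) 0 (B * Bs) =
      blk A C 0 B := by
  rw [blk_zero_mul_blk_zero, hA.mul_inv_mul, hB.mul_inv_mul, comp_zero, zero_add, comp_assoc,
    comp_assoc, ← mul_def, ← hB.commute.eq]
  rw [blk_zero_mul_blk_zero, hA.mul_mul_inv, hB.mul_mul_inv, ← comp_assoc, ← mul_def, comp_assoc,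
    comp_assoc, ← mul_def, hB.isIdempotentElem.eq, comp_add_one_sub_comp_comp_eq_self hC]

theorem blk_innerInverse_mul_upper_mul_innerInverse (hA : IsGroupInverse A As)
    (hB : IsGroupInverse B Bs) :
    blk (A * As) 0 0 (B * Bs) * blk A C 0 B *
        blk (A * As) (-(As ∘L C ∘L (B * Bs))) 0 (B * Bs) =
      blk A 0 0 B := by
  rw [blk_zero_mul_blk_zero, hA.mul_inv_mul, hB.mul_inv_mul, zero_comp, add_zero]
  rw [blk_zero_mul_blk_zero, hA.mul_mul_inv, hB.mul_mul_inv, comp_neg, ← comp_assoc, ← mul_def,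
    comp_assoc, neg_add_cancel]

end PseudoEquivalence

theorem stmt_11_general {H K : Type*} [NormedAddCommGroup H] [InnerProductSpace ℂ H]
    [NormedAddCommGroup K] [InnerProductSpace ℂ K]
    (A As : H →L[ℂ] H) (B Bs : K →L[ℂ] K) (C : K →L[ℂ] H)
    (hA1 : A * As * A = A) (hA2 : As * A * As = As) (hA3 : A * As = As * A)
    (hB1 : B * Bs * B = B) (hB2 : Bs * B * Bs = Bs) (hB3 : B * Bs = Bs * B)
    (hC : (1 - A * As) ∘L C ∘L (1 - B * Bs) = 0) :
    letI P := blk (A * As) ((1 - A * As) ∘L C ∘L Bs) 0 (B * Bs)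
    letI Q := blk (A * As) (As ∘L C) 0 (B * Bs)
    letI Pm := blk (A * As) 0 0 (B * Bs)
    letI Qm := blk (A * As) (-(As ∘L C ∘L (B * Bs))) 0 (B * Bs)
    letI M := blk A C 0 B
    letI D := blk A 0 0 B
    P * Pm * P = P ∧ Q * Qm * Q = Q ∧ P * D * Q = M ∧ Pm * M * Qm = D := by
  have hA : IsGroupInverse A As := ⟨hA1, hA2, hA3⟩
  have hB : IsGroupInverse B Bs := ⟨hB1, hB2, hB3⟩
  exact ⟨blk_left_mul_innerInverse_mul_self hA hB, blk_right_mul_innerInverse_mul_self hA hB,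
    blk_left_mul_diag_mul_right hA hB hC, blk_innerInverse_mul_upper_mul_innerInverse hA hB⟩

/-- Let `A`, `B` be group invertible (group inverses `As`, `Bs`, spectral
idempotents `Aᵖ = 1 - A As`, `Bᵖ = 1 - B Bs`) with `Aᵖ C Bᵖ = 0`.  With
`P = [[A A♯, Aᵖ C B♯],[0, B B♯]]`, `Q = [[A A♯, A♯ C],[0, B B♯]]`,
`P⁻ = [[A A♯, 0],[0, B B♯]]`, `Q⁻ = [[A A♯, -A♯ C B B♯],[0, B B♯]]`,
`M = [[A, C],[0, B]]` and `D = [[A, 0],[0, B]]`, we have that `P⁻` is an inner inverse of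
`P`, `Q⁻` is an inner inverse of `Q`, `P D Q = M` and `P⁻ M Q⁻ = D`; hence `M` and `D`
are pseudo-equivalent via `P` and `Q`. -/
theorem stmt_11 {H K : Type*} [NormedAddCommGroup H] [InnerProductSpace ℂ H] [CompleteSpace H]
    [NormedAddCommGroup K] [InnerProductSpace ℂ K] [CompleteSpace K]
    (A As : H →L[ℂ] H) (B Bs : K →L[ℂ] K) (C : K →L[ℂ] H)
    (hA1 : A * As * A = A) (hA2 : As * A * As = As) (hA3 : A * As = As * A)
    (hB1 : B * Bs * B = B) (hB2 : Bs * B * Bs = Bs) (hB3 : B * Bs = Bs * B)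
    (hC : (1 - A * As) ∘L C ∘L (1 - B * Bs) = 0) :
    letI P := blk (A * As) ((1 - A * As) ∘L C ∘L Bs) 0 (B * Bs)
    letI Q := blk (A * As) (As ∘L C) 0 (B * Bs)
    letI Pm := blk (A * As) 0 0 (B * Bs)
    letI Qm := blk (A * As) (-(As ∘L C ∘L (B * Bs))) 0 (B * Bs)
    letI M := blk A C 0 B
    letI D := blk A 0 0 B
    P * Pm * P = P ∧ Q * Qm * Q = Q ∧ P * D * Q = M ∧ Pm * M * Qm = D :=
  stmt_11_general A As B Bs C hA1 hA2 hA3 hB1 hB2 hB3 hC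
end

section
/- Let A, B be group invertible operators with Aᵖ C Bᵖ = 0. Then every pair (X, Y) of the form X = A♯ C + A♯ Z B + Aᵖ Z₁, Y = -Aᵖ C B♯ + Z + A A♯ Z B B♯ - Z B B♯ (for arbitrary Z, Z₁) solves A X - Y B = C, and the particular choice Z₁ = A♯ C, Z = (A A♯ - I) C B♯ recovers X = A♯ C and Y = (A A♯ - I) C B♯. -/
/-!
The group-inverse axioms give `A (1 - A A♯) = 0`, `(1 - A A♯) A♯ = 0`, `A♯ (A A♯ - 1) = 0`,
`A A♯ (A A♯ - 1) = 0`, `B B♯ B = B` and `B♯ B B♯ = B♯`; expanding `A X - Y B` with these leaves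
`A A♯ C + Aᵖ C B♯ B`, and `Aᵖ C Bᵖ = 0` says exactly that `Aᵖ C B♯ B = Aᵖ C`.
-/

open ContinuousLinearMap

section Ring

variable {R : Type*} [Ring R] {a b : R}

theorem mul_one_sub_mul_eq_zero (h₁ : a * b * a = a) (h₃ : a * b = b * a) :
    a * (1 - a * b) = 0 := by
  rw [mul_sub, mul_one, h₃, ← mul_assoc, h₁, sub_self]

theorem one_sub_mul_mul_eq_zero (h₂ : b * a * b = b) (h₃ : a * b = b * a) :
    (1 - a * b) * b = 0 := by
  rw [sub_mul, one_mul, h₃, h₂, sub_self]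

theorem mul_mul_sub_one_eq_zero (h₂ : b * a * b = b) : b * (a * b - 1) = 0 := by
  rw [mul_sub, mul_one, ← mul_assoc, h₂, sub_self]

theorem mul_mul_mul_sub_one_eq_zero (h₁ : a * b * a = a) : a * b * (a * b - 1) = 0 := by
  rw [mul_sub, mul_one, ← mul_assoc, h₁, sub_self]

end Ring

section Roth

variable {R M N : Type*} [Ring R]
  [TopologicalSpace M] [AddCommGroup M] [IsTopologicalAddGroup M] [Module R M]
  [TopologicalSpace N] [AddCommGroup N] [Module R N]
  {A As : M →L[R] M} {B Bs : N →L[R] N} {C Z Z₁ : N →L[R] M}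

def rothSolutionX (A As : M →L[R] M) (B : N →L[R] N) (C Z Z₁ : N →L[R] M) : N →L[R] M :=
  As ∘L C + As ∘L Z ∘L B + (1 - A * As) ∘L Z₁

def rothSolutionY (A As : M →L[R] M) (B Bs : N →L[R] N) (C Z : N →L[R] M) : N →L[R] M :=
  -((1 - A * As) ∘L C ∘L Bs) + Z + (A * As) ∘L Z ∘L (B * Bs) - Z ∘L (B * Bs)

theorem comp_rothSolutionX (hA₁ : A * As * A = A) (hA₃ : A * As = As * A) :
    A ∘L rothSolutionX A As B C Z Z₁ = (A * As) ∘L C + (A * As) ∘L Z ∘L B := by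
  simp only [rothSolutionX, comp_add, ← comp_assoc, ← mul_def,
    mul_one_sub_mul_eq_zero hA₁ hA₃, zero_comp, add_zero]

theorem rothSolutionY_comp [IsTopologicalAddGroup N]
    (hB₁ : B * Bs * B = B) (hB₃ : B * Bs = Bs * B)
    (hC : (1 - A * As) ∘L C ∘L (1 - B * Bs) = 0) :
    rothSolutionY A As B Bs C Z ∘L B = -((1 - A * As) ∘L C) + (A * As) ∘L Z ∘L B := by
  rw [rothSolutionY]
  generalize 1 - A * As = P at hC ⊢
  have hCB : P ∘L C ∘L (Bs * B) = P ∘L C := by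
    simp only [comp_sub, one_def, comp_id] at hC
    rw [← hB₃]
    exact (sub_eq_zero.mp hC).symm
  simp only [add_comp, sub_comp, neg_comp, comp_assoc, ← mul_def, hB₁, hCB]
  abel

theorem comp_rothSolutionX_sub_rothSolutionY_comp [IsTopologicalAddGroup N]
    (hA₁ : A * As * A = A) (hA₃ : A * As = As * A)
    (hB₁ : B * Bs * B = B) (hB₃ : B * Bs = Bs * B)
    (hC : (1 - A * As) ∘L C ∘L (1 - B * Bs) = 0) :
    A ∘L rothSolutionX A As B C Z Z₁ - rothSolutionY A As B Bs C Z ∘L B = C := by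
  rw [comp_rothSolutionX hA₁ hA₃, rothSolutionY_comp hB₁ hB₃ hC, sub_comp, one_def, id_comp]
  abel

theorem rothSolutionX_particular (hA₂ : As * A * As = As) (hA₃ : A * As = As * A) :
    rothSolutionX A As B C ((A * As - 1) ∘L C ∘L Bs) (As ∘L C) = As ∘L C := by
  simp only [rothSolutionX, ← comp_assoc, ← mul_def, mul_mul_sub_one_eq_zero hA₂,
    one_sub_mul_mul_eq_zero hA₂ hA₃, zero_comp, add_zero]

theorem rothSolutionY_particular (hA₁ : A * As * A = A) (hB₂ : Bs * B * Bs = Bs) :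
    rothSolutionY A As B Bs C ((A * As - 1) ∘L C ∘L Bs) = (A * As - 1) ∘L C ∘L Bs := by
  simp only [rothSolutionY, ← comp_assoc, ← mul_def, mul_mul_mul_sub_one_eq_zero hA₁, zero_comp,
    add_zero]
  simp only [comp_assoc, ← mul_def, ← mul_assoc, hB₂, ← neg_comp, neg_sub]
  abel

end Roth

theorem stmt_14_general {H K : Type*} [NormedAddCommGroup H] [InnerProductSpace ℂ H]
    [NormedAddCommGroup K] [InnerProductSpace ℂ K]
    (A As : H →L[ℂ] H) (B Bs : K →L[ℂ] K) (C : K →L[ℂ] H)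
    (hA1 : A * As * A = A) (hA2 : As * A * As = As) (hA3 : A * As = As * A)
    (hB1 : B * Bs * B = B) (hB2 : Bs * B * Bs = Bs) (hB3 : B * Bs = Bs * B)
    (hC : (1 - A * As) ∘L C ∘L (1 - B * Bs) = 0) :
    (∀ Z Z₁ : K →L[ℂ] H,
      A ∘L (As ∘L C + As ∘L Z ∘L B + (1 - A * As) ∘L Z₁) -
        (-((1 - A * As) ∘L C ∘L Bs) + Z + (A * As) ∘L Z ∘L (B * Bs) - Z ∘L (B * Bs)) ∘L B
        = C) ∧
    (As ∘L C + As ∘L ((A * As - 1) ∘L C ∘L Bs) ∘L B + (1 - A * As) ∘L (As ∘L C)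
        = As ∘L C ∧
      -((1 - A * As) ∘L C ∘L Bs) + ((A * As - 1) ∘L C ∘L Bs)
          + (A * As) ∘L ((A * As - 1) ∘L C ∘L Bs) ∘L (B * Bs)
          - ((A * As - 1) ∘L C ∘L Bs) ∘L (B * Bs)
        = (A * As - 1) ∘L C ∘L Bs) :=
  ⟨fun _ _ => comp_rothSolutionX_sub_rothSolutionY_comp hA1 hA3 hB1 hB3 hC,
    rothSolutionX_particular hA2 hA3, rothSolutionY_particular hA1 hB2⟩

/-- Let `A`, `B` be group invertible (group inverses `As`, `Bs`, spectral
idempotents `Aᵖ = 1 - A As`, `Bᵖ = 1 - B Bs`) with `Aᵖ C Bᵖ = 0`. Then every pair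
`X = A♯ C + A♯ Z B + Aᵖ Z₁`, `Y = -Aᵖ C B♯ + Z + A A♯ Z B B♯ - Z B B♯` solves
`A X - Y B = C`, and the choice `Z₁ = A♯ C`, `Z = (A A♯ - I) C B♯` recovers
`X = A♯ C`, `Y = (A A♯ - I) C B♯`. -/
theorem stmt_14 {H K : Type*} [NormedAddCommGroup H] [InnerProductSpace ℂ H] [CompleteSpace H]
    [NormedAddCommGroup K] [InnerProductSpace ℂ K] [CompleteSpace K]
    (A As : H →L[ℂ] H) (B Bs : K →L[ℂ] K) (C : K →L[ℂ] H)
    (hA1 : A * As * A = A) (hA2 : As * A * As = As) (hA3 : A * As = As * A)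
    (hB1 : B * Bs * B = B) (hB2 : Bs * B * Bs = Bs) (hB3 : B * Bs = Bs * B)
    (hC : (1 - A * As) ∘L C ∘L (1 - B * Bs) = 0) :
    (∀ Z Z₁ : K →L[ℂ] H,
      A ∘L (As ∘L C + As ∘L Z ∘L B + (1 - A * As) ∘L Z₁) -
        (-((1 - A * As) ∘L C ∘L Bs) + Z + (A * As) ∘L Z ∘L (B * Bs) - Z ∘L (B * Bs)) ∘L B
        = C) ∧
    (As ∘L C + As ∘L ((A * As - 1) ∘L C ∘L Bs) ∘L B + (1 - A * As) ∘L (As ∘L C)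
        = As ∘L C ∧
      -((1 - A * As) ∘L C ∘L Bs) + ((A * As - 1) ∘L C ∘L Bs)
          + (A * As) ∘L ((A * As - 1) ∘L C ∘L Bs) ∘L (B * Bs)
          - ((A * As - 1) ∘L C ∘L Bs) ∘L (B * Bs)
        = (A * As - 1) ∘L C ∘L Bs) :=
  stmt_14_general A As B Bs C hA1 hA2 hA3 hB1 hB2 hB3 hC
end
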